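/- (TCB-execution-protection FSM satisfies LTL(10), entry protection.) Consider the five-state Mealy machine of Figure 8 with states {NotTCB, Entry, InTCB, Exit, RESET}, inputs in(t) = (PC(t), irq(t), DMA_en(t)), and transition function δ: δ(NotTCB, in) = NotTCB if PC < TCB_min ∨ PC > TCB_max; Entry if PC = TCB_min ∧ ¬irq ∧ ¬DMA_en; RESET otherwise. δ(Entry, in) = Entry if PC = TCB_min ∧ ¬irq ∧ ¬DMA_en; InTCB if TCB_min < PC < TCB_max ∧ ¬irq ∧ ¬DMA_en; RESET otherwise. δ(InTCB, in) = InTCB if TCB_min < PC < TCB_max ∧ ¬irq ∧ ¬DMA_en; Exit if PC = TCB_max ∧ ¬irq ∧ ¬DMA_en; RESET otherwise. δ(Exit, in) = Exit if PC = TCB_max ∧ ¬irq ∧ ¬DMA_en; NotTCB if (PC < TCB_min ∨ PC > TCB_max) ∧ ¬irq ∧ ¬DMA_en; RESET otherwise. δ(RESET, in) = NotTCB if PC = 0 and RESET otherwise. The state trace is q(t+1) = δ(q(t), in(t)) and the output is reset(t) := (δ(q(t), in(t)) = RESET). Then for every initial state q(0) and every input trace, the output satisfies LTL(10): for every time t,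 if ¬reset(t) ∧ PC(t) ∉ TCB ∧ PC(t+1) ∈ TCB, then PC(t+1) = TCB_min ∨ reset(t+1). -/
import Mathlib


/-- States of the five-state TCB-execution-protection Mealy machine of Figure 8. -/
inductive TcbState
  | NotTCB
  | Entry
  | InTCB
  | Exit
  | RESET
deriving DecidableEq

open Classical in
/-- Transition function of the Mealy machine of Figure 8, parameterized by
the TCB boundaries `TCB_min`, `TCB_max` and the current inputs
`(PC, irq, DMA_en)`. -/
noncomputable def tcbDelta (TCB_min TCB_max pc : ℕ) (irq dma : Prop) :
    TcbState → TcbState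
  | .NotTCB =>
      if pc < TCB_min ∨ pc > TCB_max then .NotTCB
      else if pc = TCB_min ∧ ¬ irq ∧ ¬ dma then .Entry
      else .RESET
  | .Entry =>
      if pc = TCB_min ∧ ¬ irq ∧ ¬ dma then .Entry
      else if (TCB_min < pc ∧ pc < TCB_max) ∧ ¬ irq ∧ ¬ dma then .InTCB
      else .RESET
  | .InTCB =>
      if (TCB_min < pc ∧ pc < TCB_max) ∧ ¬ irq ∧ ¬ dma then .InTCB
      else if pc = TCB_max ∧ ¬ irq ∧ ¬ dma then .Exit
      else .RESET
  | .Exit =>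
      if pc = TCB_max ∧ ¬ irq ∧ ¬ dma then .Exit
      else if (pc < TCB_min ∨ pc > TCB_max) ∧ ¬ irq ∧ ¬ dma then .NotTCB
      else .RESET
  | .RESET =>
      if pc = 0 then .NotTCB else .RESET

/-- (TCB-execution-protection FSM satisfies LTL(10), entry protection.) -/
theorem tcb_fsm_satisfies_LTL10
    (TCB_min TCB_max : ℕ) (hpos : 0 < TCB_min) (hle : TCB_min ≤ TCB_max)
    -- the TCB region is the interval [TCB_min, TCB_max]
    (TCB : Set ℕ) (hTCB : TCB = {a : ℕ | TCB_min ≤ a ∧ a ≤ TCB_max})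
    (PC : ℕ → ℕ) (irq DMA_en : ℕ → Prop)
    (q : ℕ → TcbState)
    -- state trace: q(t+1) = δ(q(t), in(t))
    (hstep : ∀ t, q (t + 1) = tcbDelta TCB_min TCB_max (PC t) (irq t) (DMA_en t) (q t))
    -- output reset(t) := (δ(q(t), in(t)) = RESET)
    (reset : ℕ → Prop)
    (hreset : ∀ t, reset t ↔
      tcbDelta TCB_min TCB_max (PC t) (irq t) (DMA_en t) (q t) = TcbState.RESET) :
    ∀ t, ¬ reset t → PC t ∉ TCB → PC (t + 1) ∈ TCB →
      PC (t + 1) = TCB_min ∨ reset (t + 1) := by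
  intro t hnr hout hin
  rw [hreset] at hnr
  rw [hTCB] at hout hin
  simp only [Set.mem_setOf_eq, not_and, not_le] at hout
  have hq1 : q (t + 1) = TcbState.NotTCB := by
    rw [hstep]
    cases hqt : q t <;> simp only [tcbDelta, hqt] at hnr ⊢ <;>
      split_ifs at hnr ⊢ with h1 h2
    all_goals try rfl
    all_goals try exact absurd rfl hnr
    all_goals exfalso
    all_goals first
      | exact absurd h1.1 (by omega)
      | exact absurd h2.1 (by omega)
      | exact absurd h1.1.1 (by omega)
      | exact absurd h2.1.1 (by omega)
  by_cases hmin : PC (t + 1) = TCB_min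
  · exact Or.inl hmin
  · right
    rw [hreset (t + 1), hq1]
    simp only [tcbDelta]
    rw [if_neg (by simp only [Set.mem_setOf_eq] at hin; omega),
        if_neg (by intro h; exact hmin h.1)]
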